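/- arXiv:2604.17559 — 3 statements merged into one kernel-verified Lean document; each statement's English description precedes it below -/
import Mathlib

section
/- Let C be a ring that is p-adically complete and separated and p-torsion free, and let A, B ⊆ C be subrings that are each p-adically complete and separated, such that the maps A/pA → C/pC and B/pB → C/pC are injective. Then the intersection A ∩ B is p-adically complete and separated. -/
lemma smod_iff {R : Type*} [CommRing R] (r : R) (n : ℕ) (x y : R) :
    x ≡ y [SMOD ((Ideal.span {r}) ^ n • ⊤ : Ideal R)] ↔ ∃ z, x - y = r ^ n * z := by
  rw [SModEq.sub_mem, smul_eq_mul, Ideal.mul_top, Ideal.span_singleton_pow,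
    Ideal.mem_span_singleton]
  exact ⟨fun ⟨z, h⟩ => ⟨z, h⟩, fun ⟨z, h⟩ => ⟨z, h⟩⟩


/-- If `C` is a `p`-adically complete and separated, `p`-torsion-free
commutative ring, and `A`, `B` are subrings of `C` which are each `p`-adically complete
and separated, such that `A/pA → C/pC` and `B/pB → C/pC` are injective, then the
intersection `A ⊓ B` is `p`-adically complete and separated. -/
theorem stmt1 {C : Type*} [CommRing C] (p : ℕ) (hp : p.Prime)
    (hCtf : ∀ c : C, (p : C) * c = 0 → c = 0)
    (hCcomp : IsAdicComplete (Ideal.span {(p : C)}) C)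
    (A B : Subring C)
    (hAcomp : IsAdicComplete (Ideal.span {(p : A)}) A)
    (hBcomp : IsAdicComplete (Ideal.span {(p : B)}) B)
    (hAp : ∀ a : A, (∃ c : C, (a : C) = (p : C) * c) → ∃ a' : A, a = (p : A) * a')
    (hBp : ∀ b : B, (∃ c : C, (b : C) = (p : C) * c) → ∃ b' : B, b = (p : B) * b') :
    IsAdicComplete (Ideal.span {(p : (A ⊓ B : Subring C))}) (A ⊓ B : Subring C) := by
  -- p^n-torsion-freeness of C
  have hCtfn : ∀ (n : ℕ) (c : C), (p : C) ^ n * c = 0 → c = 0 := by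
    intro n
    induction n with
    | zero => intro c hc; simpa using hc
    | succ k ih =>
      intro c hc
      exact ih c (hCtf _ (by rw [← hc]; ring))
  have haus : IsHausdorff (Ideal.span {(p : (A ⊓ B : Subring C))}) (A ⊓ B : Subring C) := by
    constructor
    intro x hx
    have hxA : (⟨(x : C), x.2.1⟩ : A) = 0 := by
      apply hAcomp.toIsHausdorff.haus'
      intro n
      obtain ⟨z, hz⟩ := (smod_iff _ n _ _).1 (hx n)
      rw [smod_iff]
      refine ⟨⟨(z : C), z.2.1⟩, ?_⟩
      have := congrArg (Subtype.val) hz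
      apply Subtype.ext
      push_cast at this ⊢
      exact_mod_cast this
    have : (x : C) = 0 := congrArg Subtype.val hxA
    exact Subtype.ext this
  have prec : IsPrecomplete (Ideal.span {(p : (A ⊓ B : Subring C))}) (A ⊓ B : Subring C) := by
    constructor
    intro f hf
    set g : ℕ → A := fun n => ⟨(f n : C), (f n).2.1⟩ with hg
    set h : ℕ → B := fun n => ⟨(f n : C), (f n).2.2⟩ with hh
    have hgc : ∀ {m n : ℕ}, m ≤ n →
        g m ≡ g n [SMOD ((Ideal.span {(p : A)}) ^ m • ⊤ : Ideal A)] := by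
      intro m n hmn
      obtain ⟨z, hz⟩ := (smod_iff _ m _ _).1 (hf hmn)
      rw [smod_iff]
      refine ⟨⟨(z : C), z.2.1⟩, ?_⟩
      have := congrArg (Subtype.val) hz
      apply Subtype.ext
      push_cast at this ⊢
      exact congrArg Subtype.val hz
    have hhc : ∀ {m n : ℕ}, m ≤ n →
        h m ≡ h n [SMOD ((Ideal.span {(p : B)}) ^ m • ⊤ : Ideal B)] := by
      intro m n hmn
      obtain ⟨z, hz⟩ := (smod_iff _ m _ _).1 (hf hmn)
      rw [smod_iff]
      refine ⟨⟨(z : C), z.2.2⟩, ?_⟩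
      have := congrArg (Subtype.val) hz
      apply Subtype.ext
      push_cast at this ⊢
      exact congrArg Subtype.val hz
    obtain ⟨a, ha⟩ := hAcomp.toIsPrecomplete.prec' g @hgc
    obtain ⟨b, hb⟩ := hBcomp.toIsPrecomplete.prec' h @hhc
    -- a = b in C
    have hab : (a : C) = (b : C) := by
      have : (a : C) - (b : C) = 0 := by
        apply hCcomp.toIsHausdorff.haus'
        intro n
        obtain ⟨x, hx⟩ := (smod_iff _ n _ _).1 (ha n)
        obtain ⟨y, hy⟩ := (smod_iff _ n _ _).1 (hb n)
        have hx' := congrArg Subtype.val hx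
        have hy' := congrArg Subtype.val hy
        push_cast at hx' hy'
        rw [smod_iff]
        refine ⟨(y : C) - (x : C), ?_⟩
        have key : (a : C) - (b : C) - 0 = ((f n : C) - (b:C)) - ((f n : C) - (a:C)) := by ring
        rw [key, hx', hy']
        push_cast
        ring
      linear_combination this
    set L : (A ⊓ B : Subring C) := ⟨(a : C), ⟨a.2, hab ▸ b.2⟩⟩ with hL
    refine ⟨L, fun n => ?_⟩
    obtain ⟨x, hx⟩ := (smod_iff _ n _ _).1 (ha n)
    obtain ⟨y, hy⟩ := (smod_iff _ n _ _).1 (hb n)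
    have hx' := congrArg Subtype.val hx
    have hy' := congrArg Subtype.val hy
    push_cast at hx' hy'
    have hxy : (x : C) = (y : C) := by
      have h0 : (p : C) ^ n * ((x : C) - (y : C)) = 0 := by
        have : (p:C)^n * (x:C) = (p:C)^n * (y:C) := by
          rw [← hx', ← hy', hab]
        rw [mul_sub, this]; ring
      have := hCtfn n _ h0
      linear_combination this
    rw [smod_iff]
    refine ⟨⟨(x : C), ⟨x.2, hxy ▸ y.2⟩⟩, ?_⟩
    apply Subtype.ext
    push_cast
    exact congrArg Subtype.val hx
  exact ⟨⟩
end

section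
/- Let k be a perfect field of characteristic p and let 𝔼⁺ = k[[t]], 𝔼 = k((t)). The p-adic completion of W(k)[[T]][1/T], mapping T to a Teichmüller-type lift, is a complete discrete valuation ring with uniformizer p and residue field k((t)); in particular, the ring A := (W(k)[[T]][1/T])^∧_p is a Cohen ring for k((t)). -/
set_option synthInstance.maxHeartbeats 1000000
set_option maxHeartbeats 1000000
set_option linter.unusedSectionVars false

open AdicCompletion

namespace Stmt8Aux

variable {S : Type*} [CommRing S] (π : S)

lemma smul_top_eq (n : ℕ) :
    ((Ideal.span {π}) ^ n • ⊤ : Submodule S S) = Ideal.span {π ^ n} := by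
  have h : ((Ideal.span {π}) ^ n • ⊤ : Ideal S) = (Ideal.span {π}) ^ n := by ext x; simp
  rw [h, Ideal.span_singleton_pow]

lemma mk_eq_zero_iff (n : ℕ) (a : S) :
    (Submodule.Quotient.mk a : S ⧸ ((Ideal.span {π}) ^ n • ⊤ : Submodule S S)) = 0 ↔
      π ^ n ∣ a := by
  rw [Submodule.Quotient.mk_eq_zero, smul_top_eq, Ideal.mem_span_singleton]

local notation "C" => AdicCompletion (Ideal.span (singleton π)) S

lemma transitionMap_mk {R M : Type*} [CommRing R] [AddCommGroup M] [Module R M] {I : Ideal R}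
    {m n : ℕ} (hmn : m ≤ n) (x : M) :
    transitionMap I M hmn (Submodule.Quotient.mk x) = Submodule.Quotient.mk x := rfl

theorem exists_pow_smul (hπ : π ∈ nonZeroDivisors S) (n : ℕ)
    (x : C) (hx : x.val n = 0) : ∃ y : C, x = π ^ n • y := by
  choose a ha using fun m => Submodule.Quotient.mk_surjective _ (x.val m)
  have hdvd : ∀ m : ℕ, π ^ n ∣ a (n + m) := by
    intro m
    rw [← mk_eq_zero_iff π n]
    have := x.property (Nat.le_add_right n m)
    rw [← ha (n + m), transitionMap_mk] at this
    rw [this, hx]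
  choose b hb using hdvd
  have hbcomp : ∀ {m m' : ℕ} (hmm : m ≤ m'),
      (Submodule.Quotient.mk (b m') : S ⧸ ((Ideal.span {π}) ^ m • ⊤ : Submodule S S)) =
        Submodule.Quotient.mk (b m) := by
    intro m m' hmm
    rw [← sub_eq_zero, ← Submodule.Quotient.mk_sub, mk_eq_zero_iff]
    have h1 : (Submodule.Quotient.mk (a (n + m')) :
        S ⧸ ((Ideal.span {π}) ^ (n + m) • ⊤ : Submodule S S)) = Submodule.Quotient.mk (a (n + m)) := by
      rw [ha (n + m), ← x.property (by omega : n + m ≤ n + m'), ← ha (n + m'), transitionMap_mk]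
    rw [← sub_eq_zero, ← Submodule.Quotient.mk_sub, mk_eq_zero_iff] at h1
    rw [hb, hb, ← mul_sub] at h1
    obtain ⟨c, hc⟩ := h1
    rw [pow_add, mul_assoc] at hc
    refine ⟨c, ?_⟩
    exact (mul_cancel_left_mem_nonZeroDivisors (pow_mem hπ n)).mp hc
  refine ⟨⟨fun m => Submodule.Quotient.mk (b m), ?_⟩, ?_⟩
  · intro m m' hmm
    rw [transitionMap_mk]
    exact hbcomp hmm
  · apply Subtype.ext
    funext m
    show x.val m = (π ^ n • _ : C).val m
    show x.val m = π ^ n • (Submodule.Quotient.mk (b m) : S ⧸ _)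
    have step : x.val m = (Submodule.Quotient.mk (a (n + m)) :
        S ⧸ ((Ideal.span {π}) ^ m • ⊤ : Submodule S S)) := by
      rw [← x.property (Nat.le_add_left m n), ← ha (n + m), transitionMap_mk]
    show x.val m = π ^ n • (Submodule.Quotient.mk (b m) : S ⧸ _)
    rw [step, hb m, ← smul_eq_mul, Submodule.Quotient.mk_smul]


lemma val_algebraMap (s : S) (m : ℕ) :
    (algebraMap S C s).val m = Submodule.Quotient.mk s := rfl

lemma span_c_pow_smul_top (n : ℕ) :
    ((Ideal.span {algebraMap S C π}) ^ n • ⊤ : Submodule C C) =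
      Ideal.span {(algebraMap S C π) ^ n} :=
  smul_top_eq _ n

lemma mem_span_c_iff (n : ℕ) (x : C) :
    x ∈ ((Ideal.span {algebraMap S C π}) ^ n • ⊤ : Submodule C C) ↔
      ∃ y : C, x = π ^ n • y := by
  rw [span_c_pow_smul_top, Ideal.mem_span_singleton]
  constructor
  · rintro ⟨y, rfl⟩
    exact ⟨y, by rw [Algebra.smul_def, map_pow]⟩
  · rintro ⟨y, rfl⟩
    exact ⟨y, by rw [Algebra.smul_def, map_pow]⟩

lemma val_smul_pow_eq_zero (n : ℕ) (y : C) : ((π ^ n • y : C)).val n = 0 := by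
  obtain ⟨a, ha⟩ := Submodule.Quotient.mk_surjective _ (y.val n)
  rw [val_smul_apply, ← ha, ← Submodule.Quotient.mk_smul, smul_eq_mul, mk_eq_zero_iff]
  exact Dvd.intro _ rfl

theorem isHausdorff : IsHausdorff (Ideal.span {algebraMap S C π}) C := by
  constructor
  intro x hx
  apply Subtype.ext
  funext n
  have := (SModEq.zero).mp (hx n)
  rw [mem_span_c_iff] at this
  obtain ⟨y, rfl⟩ := this
  exact val_smul_pow_eq_zero π n y

theorem isPrecomplete (hπ : π ∈ nonZeroDivisors S) : IsPrecomplete (Ideal.span {algebraMap S C π}) C := by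
  constructor
  intro f hf
  have hcomp : ∀ {m n : ℕ} (hmn : m ≤ n),
      transitionMap (Ideal.span {π}) S hmn ((f n).val n) = (f m).val m := by
    intro m n hmn
    have h1 : ((f n - f m : C)).val m = 0 := by
      have := (SModEq.sub_mem).mp (hf hmn)
      rw [mem_span_c_iff] at this
      obtain ⟨y, hy⟩ := this
      have : (f m - f n : C) = π ^ m • y := hy
      have h2 : (f n - f m : C) = π ^ m • (-y) := by
        rw [smul_neg, ← this]; ring
      rw [h2]
      exact val_smul_pow_eq_zero π m (-y)
    have h2 : (f n).val m = (f m).val m := by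
      have := val_sub_apply (f n) (f m) m
      rw [h1] at this
      exact (sub_eq_zero.mp this.symm)
    rw [(f n).property hmn, h2]
  refine ⟨⟨fun n => (f n).val n, hcomp⟩, ?_⟩
  intro n
  refine SModEq.sub_mem.mpr ((mem_span_c_iff π n _).mpr ?_)
  set L : C := ⟨fun n => (f n).val n, hcomp⟩ with hL
  have hval : ((f n - L : C)).val n = 0 := by
    rw [val_sub]
    show (f n).val n - (f n).val n = 0
    ring
  obtain ⟨y, hy⟩ := exists_pow_smul π hπ n _ hval
  exact ⟨y, hy⟩

theorem c_nonZeroDivisor (hπ : π ∈ nonZeroDivisors S) : algebraMap S C π ∈ nonZeroDivisors C := by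
  rw [mem_nonZeroDivisors_iff_right]
  intro x hx
  apply Subtype.ext
  funext m
  obtain ⟨a, ha⟩ := Submodule.Quotient.mk_surjective _ (x.val (m + 1))
  have h1 : ((x * algebraMap S C π : C)).val (m + 1) = 0 := by rw [hx]; rfl
  rw [val_mul, val_algebraMap, ← ha] at h1
  have h2 : (Submodule.Quotient.mk (a * π) :
      S ⧸ ((Ideal.span {π}) ^ (m + 1) • ⊤ : Submodule S S)) = 0 := h1
  rw [mk_eq_zero_iff] at h2
  obtain ⟨c, hc⟩ := h2
  have hdvd : π ^ m ∣ a := by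
    refine ⟨c, ?_⟩
    have := hπ
    have hcan : π * a = π * (π ^ m * c) := by linear_combination hc
    exact (mul_cancel_left_mem_nonZeroDivisors hπ).mp hcan
  have : x.val m = Submodule.Quotient.mk a := by
    rw [← x.property (Nat.le_succ m), ← ha, transitionMap_mk]
  have h0 : ((0 : C)).val m = 0 := rfl
  rw [this, h0, mk_eq_zero_iff]
  exact hdvd

section Residue

variable (hres : ∀ z : S ⧸ ((Ideal.span {π}) ^ 1 • ⊤ : Submodule S S), z ≠ 0 → IsUnit z)
variable (hnt : Nontrivial (S ⧸ ((Ideal.span {π}) ^ 1 • ⊤ : Submodule S S)))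

theorem isUnit_of_val_one_ne_zero
    (hres : ∀ z : S ⧸ ((Ideal.span {π}) ^ 1 • ⊤ : Submodule S S), z ≠ 0 → IsUnit z)
    (x : C) (hx1 : x.val 1 ≠ 0) : IsUnit x := by
  have hn : ∀ n, IsUnit (x.val n) := by
    intro n'
    rcases n' with _ | n
    · have htop : ((Ideal.span {π}) ^ 0 • ⊤ : Submodule S S) = ⊤ := by simp
      have : Subsingleton (S ⧸ ((Ideal.span {π}) ^ 0 • ⊤ : Submodule S S)) :=
        Submodule.Quotient.subsingleton_iff.mpr htop
      exact IsUnit.of_mul_eq_one 1 (Subsingleton.elim _ _)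
    obtain ⟨a, ha⟩ := Submodule.Quotient.mk_surjective _ (x.val (n + 1))
    have h1 : (Submodule.Quotient.mk a :
        S ⧸ ((Ideal.span {π}) ^ 1 • ⊤ : Submodule S S)) = x.val 1 := by
      rw [← x.property (by omega : 1 ≤ n + 1), ← ha, transitionMap_mk]
    have hu1 : IsUnit (Submodule.Quotient.mk a :
        S ⧸ ((Ideal.span {π}) ^ 1 • ⊤ : Submodule S S)) := hres _ (h1 ▸ hx1)
    obtain ⟨z, hz⟩ := hu1.exists_right_inv
    obtain ⟨b, hb⟩ := Submodule.Quotient.mk_surjective _ z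
    rw [← hb] at hz
    have hdv : π ^ 1 ∣ (1 - a * b) := by
      rw [← mk_eq_zero_iff π 1, Submodule.Quotient.mk_sub]
      have h1' : (Submodule.Quotient.mk (1 : S) :
          S ⧸ ((Ideal.span {π}) ^ 1 • ⊤ : Submodule S S)) = 1 := rfl
      have h2' : (Submodule.Quotient.mk (a * b) :
          S ⧸ ((Ideal.span {π}) ^ 1 • ⊤ : Submodule S S)) =
          Submodule.Quotient.mk a * Submodule.Quotient.mk b := rfl
      rw [h1', h2', hz, sub_self]
    rw [pow_one] at hdv
    obtain ⟨t, ht⟩ := hdv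
    -- at level n + 1 : mk (a * b) = 1 - mk (π * t), with mk (π * t) nilpotent
    have hnil : IsNilpotent (Submodule.Quotient.mk (π * t) :
        S ⧸ ((Ideal.span {π}) ^ (n + 1) • ⊤ : Submodule S S)) := by
      refine ⟨n + 1, ?_⟩
      have : (Submodule.Quotient.mk (π * t) :
          S ⧸ ((Ideal.span {π}) ^ (n + 1) • ⊤ : Submodule S S)) ^ (n + 1) =
          Submodule.Quotient.mk ((π * t) ^ (n + 1)) := rfl
      rw [this, mk_eq_zero_iff]
      exact ⟨t ^ (n + 1), by rw [mul_pow]⟩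
    have hab : (Submodule.Quotient.mk (a * b) :
        S ⧸ ((Ideal.span {π}) ^ (n + 1) • ⊤ : Submodule S S)) =
        1 - Submodule.Quotient.mk (π * t) := by
      have : (1 : S ⧸ ((Ideal.span {π}) ^ (n + 1) • ⊤ : Submodule S S)) -
          Submodule.Quotient.mk (π * t) = Submodule.Quotient.mk (1 - π * t) := by
        rw [Submodule.Quotient.mk_sub]; rfl
      rw [this, ← ht]
      congr 1
      ring
    have hu : IsUnit (Submodule.Quotient.mk (a * b) :
        S ⧸ ((Ideal.span {π}) ^ (n + 1) • ⊤ : Submodule S S)) := by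
      rw [hab]
      exact hnil.isUnit_one_sub
    have : (Submodule.Quotient.mk (a * b) :
        S ⧸ ((Ideal.span {π}) ^ (n + 1) • ⊤ : Submodule S S)) =
        Submodule.Quotient.mk a * Submodule.Quotient.mk b := rfl
    rw [this] at hu
    rw [ha] at hu
    exact isUnit_of_mul_isUnit_left hu
  -- build the inverse as a compatible family
  choose inv hinv using fun n => (hn n).exists_right_inv
  have hcompat : ∀ {m n : ℕ} (hmn : m ≤ n),
      transitionMap (Ideal.span {π}) S hmn (inv n) = inv m := by
    intro m n hmn
    have h1 : x.val m * transitionMap (Ideal.span {π}) S hmn (inv n) = 1 := by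
      rw [← x.property hmn, ← transitionMap_map_mul, hinv n, transitionMap_map_one]
    calc transitionMap (Ideal.span {π}) S hmn (inv n)
        = (x.val m * inv m) * transitionMap (Ideal.span {π}) S hmn (inv n) := by
          rw [hinv m, one_mul]
      _ = (x.val m * transitionMap (Ideal.span {π}) S hmn (inv n)) * inv m := by ring
      _ = inv m := by rw [h1, one_mul]
  refine IsUnit.of_mul_eq_one (a := x) ⟨fun n => inv n, hcompat⟩ ?_
  apply Subtype.ext
  funext n
  show x.val n * inv n = 1
  exact hinv n

end Residue

theorem nontrivialC (hnt : Nontrivial (S ⧸ ((Ideal.span {π}) ^ 1 • ⊤ : Submodule S S))) :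
    Nontrivial C := by
  refine ⟨⟨0, 1, fun h => ?_⟩⟩
  have h01 : ((0 : C)).val 1 = ((1 : C)).val 1 := by rw [h]
  have h0 : ((0 : C)).val 1 = 0 := rfl
  have h1 : ((1 : C)).val 1 = 1 := rfl
  rw [h0, h1] at h01
  exact zero_ne_one h01

theorem exists_factor (hπ : π ∈ nonZeroDivisors S)
    (hres : ∀ z : S ⧸ ((Ideal.span {π}) ^ 1 • ⊤ : Submodule S S), z ≠ 0 → IsUnit z)
    (x : C) (hx : x ≠ 0) :
    ∃ (n : ℕ) (u : C), IsUnit u ∧ x = π ^ n • u := by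
  classical
  have hex : ∃ m, x.val m ≠ 0 := by
    by_contra hall
    push_neg at hall
    exact hx (Subtype.ext (funext fun m => by rw [hall m]; rfl))
  have hmpos : Nat.find hex ≠ 0 := by
    intro h0
    apply Nat.find_spec hex
    rw [h0]
    have htop : ((Ideal.span {π}) ^ 0 • ⊤ : Submodule S S) = ⊤ := by simp
    have : Subsingleton (S ⧸ ((Ideal.span {π}) ^ 0 • ⊤ : Submodule S S)) :=
      Submodule.Quotient.subsingleton_iff.mpr htop
    exact Subsingleton.elim _ _
  obtain ⟨n, hn⟩ := Nat.exists_eq_succ_of_ne_zero hmpos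
  have hvn : x.val n = 0 := by
    have := Nat.find_min hex (by omega : n < Nat.find hex)
    push_neg at this
    exact this
  obtain ⟨y, hy⟩ := exists_pow_smul π hπ n x hvn
  have hy1 : y.val 1 ≠ 0 := by
    intro h1
    obtain ⟨z, hz⟩ := exists_pow_smul π hπ 1 y h1
    apply Nat.find_spec hex
    have : x = π ^ (n + 1) • z := by
      rw [hy, hz, smul_smul, ← pow_add]
    rw [hn, this]
    exact val_smul_pow_eq_zero π (n + 1) z
  exact ⟨n, y, isUnit_of_val_one_ne_zero π hres y hy1, hy⟩

theorem isDomainC (hπ : π ∈ nonZeroDivisors S)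
    (hres : ∀ z : S ⧸ ((Ideal.span {π}) ^ 1 • ⊤ : Submodule S S), z ≠ 0 → IsUnit z)
    (hnt : Nontrivial (S ⧸ ((Ideal.span {π}) ^ 1 • ⊤ : Submodule S S))) :
    IsDomain C := by
  haveI : Nontrivial C := nontrivialC π hnt
  haveI : NoZeroDivisors C := by
    constructor
    intro x y hxy
    by_contra hne
    push_neg at hne
    obtain ⟨hx, hy⟩ := hne
    obtain ⟨m, u, hu, rfl⟩ := exists_factor π hπ hres x hx
    obtain ⟨n, v, hv, rfl⟩ := exists_factor π hπ hres y hy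
    have h1 : (π ^ m • u) * (π ^ n • v) = (algebraMap S C π) ^ (m + n) * (u * v) := by
      rw [Algebra.smul_def, Algebra.smul_def, map_pow, map_pow, pow_add]
      ring
    rw [h1] at hxy
    have h2 : u * v = 0 := by
      have hc := pow_mem (c_nonZeroDivisor π hπ) (m + n)
      exact (mem_nonZeroDivisors_iff_right.mp hc) _ (by linear_combination hxy)
    exact (hu.mul hv).ne_zero h2
  exact NoZeroDivisors.to_isDomain C

theorem irreducibleC (hπ : π ∈ nonZeroDivisors S)
    (hres : ∀ z : S ⧸ ((Ideal.span {π}) ^ 1 • ⊤ : Submodule S S), z ≠ 0 → IsUnit z)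
    (hnt : Nontrivial (S ⧸ ((Ideal.span {π}) ^ 1 • ⊤ : Submodule S S))) :
    Irreducible (algebraMap S C π) := by
  haveI := hnt
  have hcval : (algebraMap S C π).val 1 = 0 := by
    rw [val_algebraMap, mk_eq_zero_iff]
    rw [pow_one]
  constructor
  · intro hu
    obtain ⟨d, hd⟩ := hu.exists_right_inv
    have h1 : ((algebraMap S C π * d : C)).val 1 = 1 := by rw [hd]; rfl
    rw [val_mul, hcval, zero_mul] at h1
    exact zero_ne_one h1
  · intro a b hab
    by_cases ha1 : a.val 1 = 0
    · right
      obtain ⟨a2, ha2⟩ := exists_pow_smul π hπ 1 a ha1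
      have ha2' : a = algebraMap S C π * a2 := by rw [ha2, pow_one, Algebra.smul_def]
      have hc : (1 - a2 * b) * algebraMap S C π = 0 := by
        linear_combination hab + b * ha2'
      have hz : (1 - a2 * b : C) = 0 := (mem_nonZeroDivisors_iff_right.mp (c_nonZeroDivisor π hπ)) _ hc
      exact IsUnit.of_mul_eq_one (a := b) a2 (by linear_combination -hz)
    · left
      exact isUnit_of_val_one_ne_zero π hres a ha1

theorem hasUnitMulPow (hπ : π ∈ nonZeroDivisors S)
    (hres : ∀ z : S ⧸ ((Ideal.span {π}) ^ 1 • ⊤ : Submodule S S), z ≠ 0 → IsUnit z)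
    (hnt : Nontrivial (S ⧸ ((Ideal.span {π}) ^ 1 • ⊤ : Submodule S S))) :
    IsDiscreteValuationRing.HasUnitMulPowIrreducibleFactorization C := by
  refine ⟨algebraMap S C π, irreducibleC π hπ hres hnt, ?_⟩
  intro x hx
  obtain ⟨n, u, hu, rfl⟩ := exists_factor π hπ hres x hx
  refine ⟨n, ?_⟩
  obtain ⟨w, rfl⟩ := hu
  exact ⟨w, by rw [Algebra.smul_def, map_pow]⟩

lemma span_pow_one_top : ((Ideal.span {π}) ^ 1 • ⊤ : Ideal S) = Ideal.span {π} := by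
  rw [smul_top_eq π 1, pow_one]

theorem residue_equiv (hπ : π ∈ nonZeroDivisors S) :
    Nonempty ((C ⧸ Ideal.span {algebraMap S C π}) ≃+* S ⧸ Ideal.span {π}) := by
  let ev1 : C →+* S ⧸ ((Ideal.span {π}) ^ 1 • ⊤ : Ideal S) :=
    { toFun := fun x => x.val 1
      map_one' := rfl
      map_mul' := fun _ _ => rfl
      map_zero' := rfl
      map_add' := fun _ _ => rfl }
  let e0 := Ideal.quotEquivOfEq (span_pow_one_top π)
  let ev : C →+* S ⧸ Ideal.span {π} := e0.toRingHom.comp ev1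
  have hsurj : Function.Surjective ev := by
    apply Function.Surjective.comp e0.surjective
    intro z
    exact eval_surjective (Ideal.span {π}) S 1 z
  have hker : RingHom.ker ev = Ideal.span {algebraMap S C π} := by
    ext x
    rw [RingHom.mem_ker]
    constructor
    · intro hx
      have hx1 : x.val 1 = 0 := by
        have : e0 (ev1 x) = 0 := hx
        have h2 : ev1 x = 0 := by
          apply e0.injective
          rw [this]
          exact (_root_.map_zero e0).symm
        exact h2
      obtain ⟨y, hy⟩ := exists_pow_smul π hπ 1 x hx1
      rw [Ideal.mem_span_singleton]
      exact ⟨y, by rw [hy, pow_one, Algebra.smul_def]⟩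
    · intro hx
      obtain ⟨y, rfl⟩ := Ideal.mem_span_singleton.mp hx
      have hc1 : ev1 (algebraMap S C π) = 0 := by
        show (algebraMap S C π).val 1 = 0
        rw [val_algebraMap, mk_eq_zero_iff]
        rw [pow_one]
      have : ev (algebraMap S C π * y) = e0 (ev1 (algebraMap S C π)) * e0 (ev1 y) := by
        show e0 (ev1 (algebraMap S C π * y)) = _
        rw [map_mul, map_mul]
      rw [this, hc1, _root_.map_zero e0, zero_mul]
  exact ⟨(Ideal.quotEquivOfEq hker.symm).trans (RingHom.quotientKerEquivOfSurjective (f := ev) hsurj)⟩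

section Specific

variable (p : ℕ) [Fact p.Prime] (k : Type*) [Field k] [CharP k p] [PerfectRing k p]

lemma dvd_p_of_coeff_zero (a : WittVector p k) (ha : a.coeff 0 = 0) :
    (p : WittVector p k) ∣ a := by
  have h1 : a = WittVector.verschiebung^[1] (a.shift 1) :=
    WittVector.eq_iterate_verschiebung (by
      intro i hi
      interval_cases i
      exact ha)
  obtain ⟨y, hy⟩ := (WittVector.frobenius_bijective p k).surjective (a.shift 1)
  refine ⟨y, ?_⟩
  rw [h1, Function.iterate_one, ← hy, WittVector.verschiebung_frobenius, mul_comm]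

/-- The reduction map `(W k)[[X]] → k((t))`. -/
noncomputable def psiMap : PowerSeries (WittVector p k) →+* LaurentSeries k :=
  (HahnSeries.ofPowerSeries ℤ k).comp (PowerSeries.map WittVector.constantCoeff)

lemma psiMap_X_isUnit : IsUnit (psiMap p k PowerSeries.X) := by
  rw [psiMap, RingHom.comp_apply, PowerSeries.map_X, HahnSeries.ofPowerSeries_X,
    isUnit_iff_ne_zero]
  exact HahnSeries.single_ne_zero one_ne_zero

/-- The reduction map `(W k)[[X]][1/X] → k((t))`. -/
noncomputable def phiMap :
    Localization.Away (PowerSeries.X : PowerSeries (WittVector p k)) →+* LaurentSeries k :=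
  Localization.awayLift (psiMap p k) PowerSeries.X (psiMap_X_isUnit p k)

lemma phiMap_algebraMap (r : PowerSeries (WittVector p k)) :
    phiMap p k (algebraMap _ _ r) = psiMap p k r :=
  IsLocalization.Away.lift_eq PowerSeries.X (psiMap_X_isUnit p k) r

lemma psiMap_ker (r : PowerSeries (WittVector p k)) (hr : psiMap p k r = 0) :
    (p : PowerSeries (WittVector p k)) ∣ r := by
  have h2 : PowerSeries.map (WittVector.constantCoeff (p := p) (R := k)) r = 0 := by
    apply HahnSeries.ofPowerSeries_injective (Γ := ℤ)
    have hps : (HahnSeries.ofPowerSeries ℤ k)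
        ((PowerSeries.map (WittVector.constantCoeff (p := p) (R := k))) r) = psiMap p k r := rfl
    rw [hps, hr]
    exact (_root_.map_zero _).symm
  have h3 : ∀ i, ((PowerSeries.coeff i) r).coeff 0 = 0 := by
    intro i
    have := congrArg (PowerSeries.coeff (R := k) i) h2
    rw [PowerSeries.coeff_map, _root_.map_zero] at this
    exact this
  choose c hc using fun i =>
    dvd_p_of_coeff_zero p k ((PowerSeries.coeff i) r) (h3 i)
  refine ⟨PowerSeries.mk c, ?_⟩
  have hCp : ((p : PowerSeries (WittVector p k))) =
      PowerSeries.C (p : WittVector p k) := (map_natCast _ p).symm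
  refine PowerSeries.ext fun i => ?_
  rw [hCp, PowerSeries.coeff_C_mul, PowerSeries.coeff_mk]
  exact hc i

lemma phiMap_surjective : Function.Surjective (phiMap p k) := by
  intro z
  obtain ⟨⟨g, s⟩, hgs⟩ := IsLocalization.surj
    (Submonoid.powers (PowerSeries.X : PowerSeries k)) z
  obtain ⟨m, hm⟩ := s.property
  -- lift g to a power series over the Witt vectors
  set glift : PowerSeries (WittVector p k) :=
    PowerSeries.mk (fun i => WittVector.teichmuller p ((PowerSeries.coeff (R := k) i) g)) with hglift
  have hmap : PowerSeries.map (WittVector.constantCoeff (p := p) (R := k)) glift = g := by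
    ext i
    rw [PowerSeries.coeff_map, hglift, PowerSeries.coeff_mk]
    exact WittVector.teichmuller_coeff_zero p _
  -- an inverse of X in the localization
  obtain ⟨v, hv⟩ := (IsLocalization.map_units
    (M := Submonoid.powers (PowerSeries.X : PowerSeries (WittVector p k)))
    (Localization.Away (PowerSeries.X : PowerSeries (WittVector p k)))
    ⟨PowerSeries.X, Submonoid.mem_powers _⟩).exists_right_inv
  refine ⟨algebraMap _ _ glift * v ^ m, ?_⟩
  have hXv : psiMap p k PowerSeries.X * phiMap p k v = 1 := by
    have := congrArg (phiMap p k) hv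
    rw [map_mul, map_one] at this
    rw [← this]
    congr 1
    exact (phiMap_algebraMap p k PowerSeries.X).symm
  have hZg : z * (psiMap p k PowerSeries.X) ^ m = HahnSeries.ofPowerSeries ℤ k g := by
    have hpsiX : psiMap p k PowerSeries.X = HahnSeries.ofPowerSeries ℤ k PowerSeries.X := by
      rw [psiMap, RingHom.comp_apply, PowerSeries.map_X]
    have hm' : (PowerSeries.X : PowerSeries k) ^ m = (s : PowerSeries k) := hm
    rw [hpsiX, ← map_pow]
    have halg : (algebraMap (PowerSeries k) (LaurentSeries k)) = HahnSeries.ofPowerSeries ℤ k :=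
      rfl
    calc z * (HahnSeries.ofPowerSeries ℤ k) (PowerSeries.X ^ m)
        = z * (algebraMap (PowerSeries k) (LaurentSeries k)) (s : PowerSeries k) := by
          rw [halg, hm']
      _ = (algebraMap (PowerSeries k) (LaurentSeries k)) g := hgs
      _ = (HahnSeries.ofPowerSeries ℤ k) g := by rw [halg]
  rw [map_mul, map_pow, phiMap_algebraMap]
  have hpsig : psiMap p k glift = HahnSeries.ofPowerSeries ℤ k g := by
    rw [psiMap, RingHom.comp_apply, hmap]
  rw [hpsig, ← hZg]
  calc z * psiMap p k PowerSeries.X ^ m * phiMap p k v ^ m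
      = z * (psiMap p k PowerSeries.X * phiMap p k v) ^ m := by ring
    _ = z := by rw [hXv, one_pow, mul_one]

lemma phiMap_ker :
    RingHom.ker (phiMap p k) =
      Ideal.span {(p : Localization.Away (PowerSeries.X : PowerSeries (WittVector p k)))} := by
  ext x
  rw [RingHom.mem_ker, Ideal.mem_span_singleton]
  constructor
  · intro hx
    obtain ⟨⟨r, s⟩, hrs⟩ := IsLocalization.surj
      (Submonoid.powers (PowerSeries.X : PowerSeries (WittVector p k))) x
    have h1 : psiMap p k r = 0 := by
      have := congrArg (phiMap p k) hrs
      rw [map_mul, hx, zero_mul, phiMap_algebraMap] at this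
      exact this.symm
    obtain ⟨r2, hr2⟩ := psiMap_ker p k r h1
    obtain ⟨u, hu⟩ := (IsLocalization.map_units
      (M := Submonoid.powers (PowerSeries.X : PowerSeries (WittVector p k)))
      (Localization.Away (PowerSeries.X : PowerSeries (WittVector p k))) s).exists_right_inv
    refine ⟨algebraMap _ _ r2 * u, ?_⟩
    have hx2 : x = algebraMap _ _ r * u := by
      have := congrArg (· * u) hrs
      simp only at this
      rw [mul_assoc, hu, mul_one] at this
      exact this
    rw [hx2, hr2, map_mul, map_natCast]
    ring
  · rintro ⟨y, rfl⟩
    rw [map_mul]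
    have hp0 : phiMap p k (p : Localization.Away
        (PowerSeries.X : PowerSeries (WittVector p k))) = 0 := by
      rw [map_natCast]
      have : ((p : ℕ) : LaurentSeries k) =
          HahnSeries.ofPowerSeries ℤ k ((p : ℕ) : PowerSeries k) := by
        rw [map_natCast]
      rw [this]
      have hp : ((p : ℕ) : PowerSeries k) = 0 := by
        have : ((p : ℕ) : PowerSeries k) = PowerSeries.C ((p : ℕ) : k) := (map_natCast _ p).symm
        rw [this, CharP.cast_eq_zero k p, _root_.map_zero]
      rw [hp, _root_.map_zero]
    rw [hp0, zero_mul]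

lemma laurent_equiv :
    Nonempty ((Localization.Away (PowerSeries.X : PowerSeries (WittVector p k)) ⧸
      Ideal.span {(p : Localization.Away (PowerSeries.X : PowerSeries (WittVector p k)))}) ≃+*
      LaurentSeries k) :=
  ⟨(Ideal.quotEquivOfEq (phiMap_ker p k).symm).trans
    (RingHom.quotientKerEquivOfSurjective (f := phiMap p k) (phiMap_surjective p k))⟩

lemma p_nonZeroDivisor :
    (p : Localization.Away (PowerSeries.X : PowerSeries (WittVector p k))) ∈
      nonZeroDivisors (Localization.Away (PowerSeries.X : PowerSeries (WittVector p k))) := by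
  have hle : Submonoid.powers (PowerSeries.X : PowerSeries (WittVector p k)) ≤
      nonZeroDivisors (PowerSeries (WittVector p k)) :=
    powers_le_nonZeroDivisors_of_noZeroDivisors PowerSeries.X_ne_zero
  haveI : IsDomain (Localization.Away (PowerSeries.X : PowerSeries (WittVector p k))) :=
    IsLocalization.isDomain_localization hle
  apply mem_nonZeroDivisors_of_ne_zero
  intro h0
  have hinj := IsLocalization.injective
    (M := Submonoid.powers (PowerSeries.X : PowerSeries (WittVector p k)))
    (Localization.Away (PowerSeries.X : PowerSeries (WittVector p k))) hle
  have h1 : ((p : ℕ) : PowerSeries (WittVector p k)) = 0 := by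
    apply hinj
    rw [map_natCast, _root_.map_zero, h0]
  have h2 : ((p : ℕ) : WittVector p k) = 0 := by
    have := congrArg (PowerSeries.constantCoeff (R := WittVector p k)) h1
    rw [map_natCast, _root_.map_zero] at this
    exact this
  exact WittVector.p_nonzero p k h2

theorem main :
    ∃ hdom : IsDomain (AdicCompletion (Ideal.span
        {(p : Localization.Away (PowerSeries.X : PowerSeries (WittVector p k)))})
        (Localization.Away (PowerSeries.X : PowerSeries (WittVector p k)))),
      @IsDiscreteValuationRing (AdicCompletion (Ideal.span
        {(p : Localization.Away (PowerSeries.X : PowerSeries (WittVector p k)))})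
        (Localization.Away (PowerSeries.X : PowerSeries (WittVector p k)))) _ hdom ∧
      (Ideal.span {(p : AdicCompletion (Ideal.span
        {(p : Localization.Away (PowerSeries.X : PowerSeries (WittVector p k)))})
        (Localization.Away (PowerSeries.X : PowerSeries (WittVector p k))))}).IsMaximal ∧
      IsAdicComplete (Ideal.span {(p : AdicCompletion (Ideal.span
        {(p : Localization.Away (PowerSeries.X : PowerSeries (WittVector p k)))})
        (Localization.Away (PowerSeries.X : PowerSeries (WittVector p k))))})
        (AdicCompletion (Ideal.span
        {(p : Localization.Away (PowerSeries.X : PowerSeries (WittVector p k)))})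
        (Localization.Away (PowerSeries.X : PowerSeries (WittVector p k)))) ∧
      Nonempty ((AdicCompletion (Ideal.span
        {(p : Localization.Away (PowerSeries.X : PowerSeries (WittVector p k)))})
        (Localization.Away (PowerSeries.X : PowerSeries (WittVector p k))) ⧸
        Ideal.span {(p : AdicCompletion (Ideal.span
        {(p : Localization.Away (PowerSeries.X : PowerSeries (WittVector p k)))})
        (Localization.Away (PowerSeries.X : PowerSeries (WittVector p k))))}) ≃+*
        LaurentSeries k) := by
  set S := Localization.Away (PowerSeries.X : PowerSeries (WittVector p k)) with hSdef
  set π : S := (p : S) with hπdef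
  have hπ : π ∈ nonZeroDivisors S := p_nonZeroDivisor p k
  obtain ⟨e2⟩ := laurent_equiv p k
  have e0 : (S ⧸ ((Ideal.span {π}) ^ 1 • ⊤ : Ideal S)) ≃+* S ⧸ Ideal.span {π} :=
    Ideal.quotEquivOfEq (span_pow_one_top π)
  have hfield : IsField (S ⧸ ((Ideal.span {π}) ^ 1 • ⊤ : Submodule S S)) :=
    MulEquiv.isField (Field.toIsField (LaurentSeries k)) (e0.trans e2).toMulEquiv
  have hres : ∀ z : S ⧸ ((Ideal.span {π}) ^ 1 • ⊤ : Submodule S S), z ≠ 0 → IsUnit z := by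
    intro z hz
    obtain ⟨b, hb⟩ := hfield.mul_inv_cancel hz
    exact IsUnit.of_mul_eq_one (a := z) b hb
  have hnt : Nontrivial (S ⧸ ((Ideal.span {π}) ^ 1 • ⊤ : Submodule S S)) :=
    ⟨hfield.exists_pair_ne⟩
  have hdom : IsDomain (AdicCompletion (Ideal.span {π}) S) := isDomainC π hπ hres hnt
  have hA : (p : AdicCompletion (Ideal.span {π}) S) =
      algebraMap S (AdicCompletion (Ideal.span {π}) S) π := by
    rw [hπdef, map_natCast]
  have hspan : Ideal.span {(p : AdicCompletion (Ideal.span {π}) S)} =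
      Ideal.span {algebraMap S (AdicCompletion (Ideal.span {π}) S) π} := by rw [hA]
  obtain ⟨eA⟩ := residue_equiv π hπ
  let efinal : (AdicCompletion (Ideal.span {π}) S ⧸
      Ideal.span {(p : AdicCompletion (Ideal.span {π}) S)}) ≃+* LaurentSeries k :=
    ((Ideal.quotEquivOfEq hspan).trans eA).trans e2
  refine ⟨hdom, ?_, ?_, ?_, ⟨efinal⟩⟩
  · exact @IsDiscreteValuationRing.ofHasUnitMulPowIrreducibleFactorization _ _ hdom
      (hasUnitMulPow π hπ hres hnt)
  · exact Ideal.Quotient.maximal_of_isField _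
      (MulEquiv.isField (Field.toIsField (LaurentSeries k)) efinal.toMulEquiv)
  · rw [hspan]
    haveI := isHausdorff π (S := S)
    haveI := isPrecomplete π hπ
    constructor

end Specific

end Stmt8Aux

/-- Let `k` be a perfect field of characteristic `p`. The `p`-adic
completion `A` of `W(k)[[T]][1/T]` is a complete discrete valuation ring whose maximal
ideal is generated by `p` and whose residue field is isomorphic to the Laurent series
field `k((t))`; in particular `A` is a Cohen ring for `k((t))`. -/
theorem stmt8 (p : ℕ) [Fact p.Prime] (k : Type*) [Field k] [CharP k p]
    [PerfectRing k p] :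
    letI R := PowerSeries (WittVector p k)
    letI Rloc := Localization.Away (PowerSeries.X : R)
    letI A := AdicCompletion (Ideal.span {(p : Rloc)}) Rloc
    ∃ hdom : IsDomain A, @IsDiscreteValuationRing A _ hdom ∧
      (Ideal.span {(p : A)}).IsMaximal ∧
      IsAdicComplete (Ideal.span {(p : A)}) A ∧
      Nonempty ((A ⧸ Ideal.span {(p : A)}) ≃+* LaurentSeries k) :=
  Stmt8Aux.main p k
end

section
/- Let W be a ring, A ⊆ W a subring, p, μ ∈ A, and suppose: A/(p,μ) is a field, the map A/(p,μ) → W/(p,μ) is nonzero, W/p is μ-torsion free, and W/μ^n is p-torsion free for all n ≥ 1. Then for all n, m ≥ 1, the map A/(p^m, μ^n) → W/(p^m, μ^n) is injective, provided additionally that A/p is μ-torsion free and A is p-torsion free with A/p^m μ-torsion free. In the simplest nontrivial case: if A/(p,μ) → W/(p,μ) is injective and W/p is μ-torsion free and A/p is μ-torsion free with A/(p,μ) → W/(p,μ) injective, then A/(p,μ^n) → W/(p,μ^n) is injective for all n ≥ 1. -/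
/-- simplest nontrivial case: Let `W` be a commutative ring, `A ⊆ W` a
subring and `p, μ ∈ A`. Suppose the map `A/(p,μ) → W/(p,μ)` is injective, `W/p` is
`μ`-torsion free and `A/p` is `μ`-torsion free. Then `A/(p,μ^n) → W/(p,μ^n)` is
injective for all `n ≥ 1`. -/
theorem stmt17 {W : Type*} [CommRing W] (A : Subring W) (p μ : W)
    (hpA : p ∈ A) (hμA : μ ∈ A)
    -- `A/(p,μ) → W/(p,μ)` is injective
    (hinj : ∀ a ∈ A, (∃ x y : W, a = p * x + μ * y) →
      ∃ b ∈ A, ∃ c ∈ A, a = p * b + μ * c)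
    -- `W/p` is `μ`-torsion free
    (hWp : ∀ w : W, (∃ x : W, μ * w = p * x) → ∃ y : W, w = p * y)
    -- `A/p` is `μ`-torsion free
    (hAp : ∀ a ∈ A, (∃ b ∈ A, μ * a = p * b) → ∃ c ∈ A, a = p * c) :
    ∀ n : ℕ, 1 ≤ n → ∀ a ∈ A, (∃ x y : W, a = p * x + μ ^ n * y) →
      ∃ b ∈ A, ∃ c ∈ A, a = p * b + μ ^ n * c := by
  -- iterated torsion-freeness: μ^n * w = p * x → w ∈ pW
  have hWpn : ∀ n : ℕ, ∀ w : W, (∃ x : W, μ ^ n * w = p * x) → ∃ y : W, w = p * y := by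
    intro n
    induction n with
    | zero => intro w ⟨x, hx⟩; exact ⟨x, by simpa using hx⟩
    | succ n ih =>
      intro w ⟨x, hx⟩
      apply ih
      obtain ⟨y, hy⟩ := hWp (μ ^ n * w) ⟨x, by ring_nf; ring_nf at hx; linear_combination hx⟩
      exact ⟨y, hy⟩
  intro n hn
  induction n with
  | zero => omega
  | succ n ih =>
    intro a ha ⟨x, y, hxy⟩
    rcases Nat.eq_or_lt_of_le hn with h1 | h1
    · -- n + 1 = 1
      have : n = 0 := by omega
      subst this
      obtain ⟨b, hb, c, hc, h⟩ := hinj a ha ⟨x, y, by simpa using hxy⟩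
      exact ⟨b, hb, c, hc, by simpa using h⟩
    · have hn' : 1 ≤ n := by omega
      obtain ⟨b, hb, c, hc, h⟩ := ih hn' a ha ⟨x, μ * y, by rw [hxy]; ring⟩
      -- p*b + μ^n*c = p*x + μ^(n+1)*y ⇒ μ^n*(c - μ*y) = p*(x - b)
      have hdiv : ∃ z : W, c - μ * y = p * z :=
        hWpn n (c - μ * y) ⟨x - b, by linear_combination hxy - h⟩
      obtain ⟨z, hz⟩ := hdiv
      -- c = p*z + μ*y, so by hinj, c = p*d + μ*e with d,e ∈ A
      obtain ⟨d, hd, e, he, hde⟩ := hinj c hc ⟨z, y, by linear_combination hz⟩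
      refine ⟨b + μ ^ n * d, A.add_mem hb (A.mul_mem (A.pow_mem hμA n) hd), e, he, ?_⟩
      rw [h, hde]; ring
end
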